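/- arXiv:1812.06952 — 2 statements merged into one kernel-verified Lean document; each statement's English description precedes it below -/
import Mathlib

section
/- For the small Coppersmith–Winograd tensor cw_q with q ≥ 1, the Strassen upper support functional at θ = (1/3,1/3,1/3) satisfies ρ^θ(cw_q) ≤ log₂ 3 − 2/3 + (2/3)log₂ q; explicitly, for every probability distribution P on the support {(0,i,i),(i,0,i),(i,i,0) : 1 ≤ i ≤ q}, the average marginal Shannon entropy (H(P₁)+H(P₂)+H(P₃))/3 is at most log₂ 3 − 2/3 + (2/3)log₂ q. -/
open scoped BigOperators

/-- A 3-tensor over a field `F`, given by its dimensions and coordinate array. -/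
structure Tensor (F : Type) [Field F] where
  n1 : ℕ
  n2 : ℕ
  n3 : ℕ
  val : Fin n1 → Fin n2 → Fin n3 → F

namespace Tensor

variable {F : Type} [Field F]

/-- `Restricts t s` means `t ≥ s`: there are linear maps on the three factors mapping `t` to `s`. -/
def Restricts (t s : Tensor F) : Prop :=
  ∃ (A1 : Matrix (Fin s.n1) (Fin t.n1) F) (A2 : Matrix (Fin s.n2) (Fin t.n2) F)
    (A3 : Matrix (Fin s.n3) (Fin t.n3) F),
    ∀ a b c, s.val a b c =
      ∑ i, ∑ j, ∑ k, A1 a i * A2 b j * A3 c k * t.val i j k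

/-- Kronecker (tensor) product of two 3-tensors. -/
def tmul (t s : Tensor F) : Tensor F :=
  ⟨t.n1 * s.n1, t.n2 * s.n2, t.n3 * s.n3, fun a b c =>
    t.val (finProdFinEquiv.symm a).1 (finProdFinEquiv.symm b).1 (finProdFinEquiv.symm c).1 *
    s.val (finProdFinEquiv.symm a).2 (finProdFinEquiv.symm b).2 (finProdFinEquiv.symm c).2⟩

/-- The trivial `1×1×1` tensor. -/
def unit : Tensor F := ⟨1, 1, 1, fun _ _ _ => 1⟩

/-- Kronecker power. -/
def tpow (t : Tensor F) : ℕ → Tensor F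
  | 0 => unit
  | n + 1 => tmul (tpow t n) t

/-- The rank-`n` diagonal (unit) tensor `⟨n⟩`. -/
def diag (n : ℕ) : Tensor F :=
  ⟨n, n, n, fun i j k => if i = j ∧ j = k then 1 else 0⟩

/-- The matrix multiplication tensor `⟨a,b,c⟩`. -/
def mm (a b c : ℕ) : Tensor F :=
  ⟨a * b, b * c, c * a, fun x y z =>
    if (finProdFinEquiv.symm x).1 = (finProdFinEquiv.symm z).2 ∧
       (finProdFinEquiv.symm x).2 = (finProdFinEquiv.symm y).1 ∧
       (finProdFinEquiv.symm y).2 = (finProdFinEquiv.symm z).1 then 1 else 0⟩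

/-- A tensor is simple if it is of the form `u ⊗ v ⊗ w`. -/
def IsSimple (t : Tensor F) : Prop :=
  ∃ (u : Fin t.n1 → F) (v : Fin t.n2 → F) (w : Fin t.n3 → F),
    ∀ i j k, t.val i j k = u i * v j * w k

/-- Tensor rank. -/
noncomputable def rank (t : Tensor F) : ℕ := sInf {n | Restricts (diag n) t}

/-- Subrank. -/
noncomputable def subrank (t : Tensor F) : ℕ := sSup {n | Restricts t (diag n)}

/-- Asymptotic rank `Q̃(t) = lim R(t^{⊗n})^{1/n} = inf_n R(t^{⊗n})^{1/n}`. -/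
noncomputable def asympRank (t : Tensor F) : ℝ :=
  ⨅ n : ℕ+, (rank (tpow t n) : ℝ) ^ ((n : ℝ)⁻¹)

/-- Asymptotic subrank `Q(t) = lim Q(t^{⊗n})^{1/n} = sup_n Q(t^{⊗n})^{1/n}`. -/
noncomputable def asympSubrank (t : Tensor F) : ℝ :=
  ⨆ n : ℕ+, (subrank (tpow t n) : ℝ) ^ ((n : ℝ)⁻¹)

/-- `relexpSeq t s n = min { m : t^{⊗m} ≥ s^{⊗n} }`. -/
noncomputable def relexpSeq (t s : Tensor F) (n : ℕ) : ℕ :=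
  sInf {m | Restricts (tpow t m) (tpow s n)}

/-- Relative exponent `ω(t,s) = lim_n (1/n) min{m : t^{⊗m} ≥ s^{⊗n}} = sup_n ...`. -/
noncomputable def relexp (t s : Tensor F) : ℝ :=
  ⨆ n : ℕ+, (relexpSeq t s n : ℝ) / (n : ℝ)

/-- Irreversibility, as the product of relative exponents. -/
noncomputable def irr (t : Tensor F) : ℝ := relexp (diag 2) t * relexp t (diag 2)

/-- Irreversibility, as a ratio of logarithms. -/
noncomputable def irrL (t : Tensor F) : ℝ :=
  Real.logb 2 (asympRank t) / Real.logb 2 (asympSubrank t)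

/-- First flattening of a tensor, an `n1 × (n2·n3)` matrix. -/
def flatten1 (t : Tensor F) : Matrix (Fin t.n1) (Fin t.n2 × Fin t.n3) F :=
  fun a p => t.val a p.1 p.2

/-- Second flattening. -/
def flatten2 (t : Tensor F) : Matrix (Fin t.n2) (Fin t.n1 × Fin t.n3) F :=
  fun b p => t.val p.1 b p.2

/-- Third flattening. -/
def flatten3 (t : Tensor F) : Matrix (Fin t.n3) (Fin t.n1 × Fin t.n2) F :=
  fun c p => t.val p.1 p.2 c

end Tensor

namespace Tensor

variable {F : Type} [Field F]

/-- The small Coppersmith–Winograd tensor `cw_q`. -/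
def cw (q : ℕ) : Tensor F :=
  ⟨q + 1, q + 1, q + 1, fun i j k =>
    if ((i : ℕ) = 0 ∧ j = k ∧ (j : ℕ) ≠ 0) ∨
       ((j : ℕ) = 0 ∧ i = k ∧ (i : ℕ) ≠ 0) ∨
       ((k : ℕ) = 0 ∧ i = j ∧ (i : ℕ) ≠ 0) then 1 else 0⟩

end Tensor

/-- Shannon entropy (base 2) of a finitely supported probability vector. -/
noncomputable def entH {m : ℕ} (p : Fin m → ℝ) : ℝ :=
  ∑ i, -(p i * Real.logb 2 (p i))

/-- Gibbs' inequality: the entropy is bounded by the cross entropy with any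
(sub-)probability reference vector `Q`. -/
lemma entH_le_cross {m : ℕ} (p Q : Fin m → ℝ) (hp : ∀ i, 0 ≤ p i)
    (hQ : ∀ i, 0 < Q i) (hle : ∑ i, Q i ≤ ∑ i, p i) :
    entH p ≤ ∑ i, -(p i * Real.logb 2 (Q i)) := by
  have hlog2 : (0:ℝ) < Real.log 2 := Real.log_pos (by norm_num)
  have key : ∀ i, -(p i * Real.logb 2 (p i)) ≤
      -(p i * Real.logb 2 (Q i)) + (Q i - p i) / Real.log 2 := by
    intro i
    rcases eq_or_lt_of_le (hp i) with h0 | h0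
    · rw [← h0]
      simp only [zero_mul, neg_zero, zero_add, sub_zero]
      exact div_nonneg (hQ i).le hlog2.le
    · have hQp : 0 < Q i / p i := div_pos (hQ i) h0
      have hlog : Real.log (Q i / p i) ≤ Q i / p i - 1 :=
        Real.log_le_sub_one_of_pos hQp
      have h2 : p i * Real.log (Q i / p i) ≤ Q i - p i := by
        calc p i * Real.log (Q i / p i) ≤ p i * (Q i / p i - 1) :=
              mul_le_mul_of_nonneg_left hlog h0.le
          _ = Q i - p i := by field_simp
      have h3 : Real.logb 2 (Q i) - Real.logb 2 (p i) = Real.logb 2 (Q i / p i) :=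
        (Real.logb_div (ne_of_gt (hQ i)) (ne_of_gt h0)).symm
      have h4 : p i * Real.logb 2 (Q i / p i) ≤ (Q i - p i) / Real.log 2 := by
        rw [Real.logb, ← mul_div_assoc]
        exact (div_le_div_iff_of_pos_right hlog2).mpr h2
      nlinarith [h4, h3, mul_le_mul_of_nonneg_left (le_of_eq h3) h0.le]
  calc entH p = ∑ i, -(p i * Real.logb 2 (p i)) := rfl
    _ ≤ ∑ i, (-(p i * Real.logb 2 (Q i)) + (Q i - p i) / Real.log 2) :=
        Finset.sum_le_sum fun i _ => key i
    _ = (∑ i, -(p i * Real.logb 2 (Q i))) + (∑ i, Q i - ∑ i, p i) / Real.log 2 := by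
        rw [Finset.sum_add_distrib, ← Finset.sum_div, Finset.sum_sub_distrib]
    _ ≤ ∑ i, -(p i * Real.logb 2 (Q i)) := by
        have : (∑ i, Q i - ∑ i, p i) / Real.log 2 ≤ 0 :=
          div_nonpos_of_nonpos_of_nonneg (by linarith) hlog2.le
        linarith

/-- The key single-marginal bound via Gibbs' inequality with reference
distribution `(1/3, 2/(3q), …, 2/(3q))`. -/
lemma marg_bound (q : ℕ) (hq : 1 ≤ q) (p : Fin (q + 1) → ℝ)
    (hp : ∀ i, 0 ≤ p i) (hs : ∑ i, p i = 1) :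
    entH p ≤ p 0 * Real.logb 2 3 +
      (1 - p 0) * (Real.logb 2 3 + Real.logb 2 q - 1) := by
  have hq0 : (0:ℝ) < q := by exact_mod_cast hq
  set Q : Fin (q + 1) → ℝ := fun i => if (i : ℕ) = 0 then 1/3 else 2/(3*q) with hQdef
  have hQ0 : Q 0 = 1/3 := by simp [hQdef]
  have hQs : ∀ i : Fin q, Q i.succ = 2/(3*q) := by
    intro i; simp [hQdef, Fin.val_succ]
  have hQpos : ∀ i, 0 < Q i := by
    intro i
    simp only [hQdef]
    split
    · norm_num
    · positivity
  have hQsum : ∑ i, Q i = 1 := by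
    rw [Fin.sum_univ_succ, hQ0]
    have : ∀ i : Fin q, Q i.succ = 2/(3*q) := hQs
    rw [Finset.sum_congr rfl fun i _ => hQs i, Finset.sum_const, Finset.card_univ,
      Fintype.card_fin, nsmul_eq_mul]
    field_simp
    ring
  have hrest : ∑ i : Fin q, p i.succ = 1 - p 0 := by
    rw [Fin.sum_univ_succ] at hs; linarith
  have hgibbs := entH_le_cross p Q hp hQpos (by rw [hQsum, hs])
  have hcomp : ∑ i, -(p i * Real.logb 2 (Q i)) =
      p 0 * Real.logb 2 3 + (1 - p 0) * (Real.logb 2 3 + Real.logb 2 q - 1) := by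
    rw [Fin.sum_univ_succ, hQ0,
      Finset.sum_congr rfl fun (i : Fin q) _ => by rw [hQs i]]
    have l13 : Real.logb 2 ((1:ℝ)/3) = -Real.logb 2 3 := by
      rw [one_div, Real.logb_inv]
    have l23 : Real.logb 2 (2/(3*(q:ℝ))) = 1 - (Real.logb 2 3 + Real.logb 2 q) := by
      rw [Real.logb_div (by norm_num) (by positivity),
        Real.logb_mul (by norm_num) (by positivity),
        Real.logb_self_eq_one (by norm_num)]
    rw [l13, l23]
    have : ∑ i : Fin q, -(p i.succ * (1 - (Real.logb 2 3 + Real.logb 2 q))) =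
        -((∑ i : Fin q, p i.succ) * (1 - (Real.logb 2 3 + Real.logb 2 q))) := by
      rw [Finset.sum_neg_distrib, Finset.sum_mul]
    rw [this, hrest]
    ring
  linarith [hgibbs, le_of_eq hcomp]

lemma pull_if {α : Type*} [Fintype α] (c : Prop) [Decidable c] (f : α → ℝ) :
    ∑ x, (if c then f x else 0) = if c then ∑ x, f x else 0 := by
  split <;> simp

open Tensor in
/-- for every probability distribution on the support of `cw_q`
(`q ≥ 1`), the average marginal entropy is at most `log₂ 3 − 2/3 + (2/3) log₂ q`.
This is the Strassen upper support functional bound at `θ = (1/3,1/3,1/3)`. -/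
theorem cw_support_functional_bound (q : ℕ) (hq : 1 ≤ q)
    (P : Fin (q + 1) → Fin (q + 1) → Fin (q + 1) → ℝ)
    (hpos : ∀ i j k, 0 ≤ P i j k)
    (hsum : ∑ i, ∑ j, ∑ k, P i j k = 1)
    (hsupp : ∀ i j k, P i j k ≠ 0 →
      ((i : ℕ) = 0 ∧ j = k ∧ (j : ℕ) ≠ 0) ∨
      ((j : ℕ) = 0 ∧ i = k ∧ (i : ℕ) ≠ 0) ∨
      ((k : ℕ) = 0 ∧ i = j ∧ (i : ℕ) ≠ 0)) :
    (entH (fun i => ∑ j, ∑ k, P i j k) +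
     entH (fun j => ∑ i, ∑ k, P i j k) +
     entH (fun k => ∑ i, ∑ j, P i j k)) / 3 ≤
      Real.logb 2 3 - 2/3 + (2/3) * Real.logb 2 q := by
  set L3 := Real.logb 2 3 with hL3
  set Lq := Real.logb 2 (q : ℝ) with hLq
  -- the three marginals
  set p1 : Fin (q+1) → ℝ := fun i => ∑ j, ∑ k, P i j k with hp1
  set p2 : Fin (q+1) → ℝ := fun j => ∑ i, ∑ k, P i j k with hp2
  set p3 : Fin (q+1) → ℝ := fun k => ∑ i, ∑ j, P i j k with hp3
  have hp1nn : ∀ i, 0 ≤ p1 i := fun i =>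
    Finset.sum_nonneg fun j _ => Finset.sum_nonneg fun k _ => hpos i j k
  have hp2nn : ∀ j, 0 ≤ p2 j := fun j =>
    Finset.sum_nonneg fun i _ => Finset.sum_nonneg fun k _ => hpos i j k
  have hp3nn : ∀ k, 0 ≤ p3 k := fun k =>
    Finset.sum_nonneg fun i _ => Finset.sum_nonneg fun j _ => hpos i j k
  have hs1 : ∑ i, p1 i = 1 := hsum
  have hs2 : ∑ j, p2 j = 1 := by
    rw [show ∑ j, p2 j = ∑ i, ∑ j, ∑ k, P i j k from Finset.sum_comm]
    exact hsum
  have hs3 : ∑ k, p3 k = 1 := by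
    have step1 : ∑ k, p3 k = ∑ i, ∑ k, ∑ j, P i j k := Finset.sum_comm
    rw [step1, Finset.sum_congr rfl fun i _ =>
      (Finset.sum_comm : ∑ k, ∑ j, P i j k = ∑ j, ∑ k, P i j k)]
    exact hsum
  -- the three "zero marginal" masses sum to one
  have hA : p1 0 + p2 0 + p3 0 = 1 := by
    have e0 : ∀ i j k, P i j k =
        (if i = (0 : Fin (q+1)) then P i j k else 0) +
        (if j = (0 : Fin (q+1)) then P i j k else 0) +
        (if k = (0 : Fin (q+1)) then P i j k else 0) := by
      intro i j k
      by_cases hP : P i j k = 0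
      · simp [hP]
      · have hz : ∀ a : Fin (q+1), a = 0 ↔ (a : ℕ) = 0 := by
          intro a; rw [Fin.ext_iff]; rfl
        rcases hsupp i j k hP with ⟨hi, hjk, hj⟩ | ⟨hj, hik, hi⟩ | ⟨hk, hij, hi⟩
        · have hi0 : i = 0 := (hz i).mpr hi
          have hj0 : j ≠ 0 := fun h => hj ((hz j).mp h)
          have hk0 : k ≠ 0 := fun h => hj ((hz j).mp (hjk ▸ h))
          simp [hi0, hj0, hk0]
        · have hj0 : j = 0 := (hz j).mpr hj
          have hi0 : i ≠ 0 := fun h => hi ((hz i).mp h)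
          have hk0 : k ≠ 0 := fun h => hi ((hz i).mp (hik ▸ h))
          simp [hj0, hi0, hk0]
        · have hk0 : k = 0 := (hz k).mpr hk
          have hi0 : i ≠ 0 := fun h => hi ((hz i).mp h)
          have hj0 : j ≠ 0 := fun h => hi ((hz i).mp (hij ▸ h))
          simp [hk0, hi0, hj0]
    have esplit : (1:ℝ) =
        (∑ i, ∑ j, ∑ k, if i = (0 : Fin (q+1)) then P i j k else 0) +
        (∑ i, ∑ j, ∑ k, if j = (0 : Fin (q+1)) then P i j k else 0) +
        (∑ i, ∑ j, ∑ k, if k = (0 : Fin (q+1)) then P i j k else 0) := by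
      rw [← hsum]
      rw [Finset.sum_congr rfl fun i _ => Finset.sum_congr rfl fun j _ =>
        Finset.sum_congr rfl fun k _ => e0 i j k]
      simp only [Finset.sum_add_distrib]
    have t1 : (∑ i, ∑ j, ∑ k, if i = (0 : Fin (q+1)) then P i j k else 0) = p1 0 := by
      rw [Finset.sum_congr rfl fun i _ => Finset.sum_congr rfl fun j _ => pull_if _ _]
      rw [Finset.sum_congr rfl fun i (_ : i ∈ Finset.univ) => pull_if _ _]
      simp [hp1]
    have t2 : (∑ i, ∑ j, ∑ k, if j = (0 : Fin (q+1)) then P i j k else 0) = p2 0 := by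
      rw [Finset.sum_congr rfl fun i _ => Finset.sum_congr rfl fun j _ => pull_if _ _]
      simp [hp2]
    have t3 : (∑ i, ∑ j, ∑ k, if k = (0 : Fin (q+1)) then P i j k else 0) = p3 0 := by
      simp [hp3]
    rw [t1, t2, t3] at esplit
    linarith
  have b1 := marg_bound q hq p1 hp1nn hs1
  have b2 := marg_bound q hq p2 hp2nn hs2
  have b3 := marg_bound q hq p3 hp3nn hs3
  rw [← hL3, ← hLq] at b1 b2 b3
  have hkey : p1 0 * L3 + (1 - p1 0) * (L3 + Lq - 1) +
      (p2 0 * L3 + (1 - p2 0) * (L3 + Lq - 1)) +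
      (p3 0 * L3 + (1 - p3 0) * (L3 + Lq - 1)) = 3 * L3 + 2 * Lq - 2 := by
    linear_combination (1 - Lq) * hA
  linarith [b1, b2, b3, hkey]
end

section
/- For the big Coppersmith–Winograd tensor CW_q, the maximum over distributions P on its support of the average marginal entropy, restricted by symmetry to distributions assigning probability x to each of (0,i,i),(i,0,i),(i,i,0) for i ∈ [q] and 1/3 − qx to each of (0,0,q+1),(0,q+1,0),(q+1,0,0), equals the maximum of f_q(x) = −(2/3 − qx)log₂(2/3 − qx) − 2qx·log₂(2x) − (1/3 − qx)log₂(1/3 − qx) over x ∈ [0, 1/(3q)], and for q ≥ 3 this maximum is attained at x* = (3q − √(32+q²))/(6(q²−4)). -/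
open scoped BigOperators

/-- The function `f_q` from the analysis of `CW_q`. -/
noncomputable def fCW (q : ℕ) (x : ℝ) : ℝ :=
  -(2/3 - q * x) * Real.logb 2 (2/3 - q * x) - q * (2 * x) * Real.logb 2 (2 * x)
    - (1/3 - q * x) * Real.logb 2 (1/3 - q * x)

/-- The marginal distribution of the symmetric distribution on the support of
`CW_q` which puts weight `x` on each of `(0,i,i),(i,0,i),(i,i,0)` and `1/3 − qx`
on each of `(0,0,q+1),(0,q+1,0),(q+1,0,0)`. -/
noncomputable def cwMarginal (q : ℕ) (x : ℝ) : Fin (q + 2) → ℝ :=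
  fun i => if (i : ℕ) = 0 then 2/3 - q * x
    else if (i : ℕ) = q + 1 then 1/3 - q * x else 2 * x

/-!
Up to the factor `1 / log 2`, `f_q(x) = η(2/3 - qx) + q η(2x) + η(1/3 - qx)` with
`η = negMulLog`. Each term is `η` composed with an affine map, so `f_q` is strictly concave on
`[0, 1/(3q)]`. Its derivative is a positive multiple of
`log (2/3 - qx) + log (1/3 - qx) - 2 log (2x)`, which vanishes when
`(2/3 - qx)(1/3 - qx) = (2x)²`, i.e. `(q² - 4)x² - qx + 2/9 = 0`; the smaller root `x*` lies in
`(0, 1/(3q))` once `q > 2`. An interior critical point of a strictly concave function is its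
unique maximiser.
-/

section

open Real Set

lemma StrictConcaveOn.const_mul {E : Type*} [AddCommMonoid E] [Module ℝ E] {s : Set E}
    {f : E → ℝ} {c : ℝ} (hf : StrictConcaveOn ℝ s f) (hc : 0 < c) :
    StrictConcaveOn ℝ s (fun x => c * f x) := by
  refine ⟨hf.1, fun x hx y hy hxy a b ha hb hab => ?_⟩
  have := mul_lt_mul_of_pos_left (hf.2 hx hy hxy ha hb hab) hc
  simp only [smul_eq_mul] at this ⊢
  linarith

lemma StrictConcaveOn.comp_affine {s : Set ℝ} {f : ℝ → ℝ} (hf : StrictConcaveOn ℝ s f)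
    (a : ℝ) {b : ℝ} (hb : b ≠ 0) :
    StrictConcaveOn ℝ ((fun x => a + b * x) ⁻¹' s) (fun x => f (a + b * x)) := by
  have hcomb : ∀ {x y μ ν : ℝ}, μ + ν = 1 →
      a + b * (μ • x + ν • y) = μ • (a + b * x) + ν • (a + b * y) := by
    intro x y μ ν h
    simp only [smul_eq_mul]
    linear_combination (-a) * h
  refine ⟨fun x hx y hy μ ν hμ hν h => ?_, fun x hx y hy hxy μ ν hμ hν h => ?_⟩
  · simpa only [mem_preimage, hcomb h] using hf.1 hx hy hμ hν h
  · simpa only [hcomb h] using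
      hf.2 hx hy (fun he => hxy (mul_left_cancel₀ hb (add_left_cancel he))) hμ hν h

lemma ConcaveOn.isMaxOn_of_hasDerivAt_eq_zero {S : Set ℝ} {f : ℝ → ℝ} {x : ℝ}
    (hf : ConcaveOn ℝ S f) (hx : x ∈ interior S) (hf' : HasDerivAt f 0 x) : IsMaxOn f S x := by
  have hleft : derivWithin (-f) (Iio x) x = 0 :=
    (hf'.neg.hasDerivWithinAt.derivWithin (uniqueDiffWithinAt_Iio x)).trans neg_zero
  simpa using (hf.neg.isMinOn_of_leftDeriv_eq_zero hx hleft).neg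

lemma StrictConcaveOn.lt_of_isMaxOn {𝕜 E β : Type*} [Field 𝕜] [LinearOrder 𝕜]
    [IsStrictOrderedRing 𝕜] [AddCommMonoid E] [Module 𝕜 E] [AddCommMonoid β] [LinearOrder β]
    [IsOrderedAddMonoid β] [Module 𝕜 β] [PosSMulMono 𝕜 β] {s : Set E} {f : E → β} {x y : E}
    (hf : StrictConcaveOn 𝕜 s f) (hmax : IsMaxOn f s x) (hx : x ∈ s) (hy : y ∈ s)
    (hyx : y ≠ x) : f y < f x :=
  (hmax hy).lt_of_ne fun h => hyx <| hf.eq_of_isMaxOn (fun _ hz => h ▸ hmax hz) hmax hy hx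

lemma entH_cwMarginal (q : ℕ) (x : ℝ) : entH (cwMarginal q x) = fCW q x := by
  have hfirst : cwMarginal q x 0 = 2 / 3 - q * x := by simp [cwMarginal]
  have hmiddle (i : Fin q) : cwMarginal q x i.castSucc.succ = 2 * x := by
    simp [cwMarginal, i.isLt.ne]
  have hlast : cwMarginal q x (Fin.last q).succ = 1 / 3 - q * x := by simp [cwMarginal]
  rw [entH, Fin.sum_univ_succ, Fin.sum_univ_castSucc, hfirst, hlast]
  simp only [hmiddle, Finset.sum_const, Finset.card_univ, Fintype.card_fin, nsmul_eq_mul, fCW]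
  ring

lemma fCW_eq_negMulLog (q : ℕ) : fCW q = fun x =>
    (log 2)⁻¹ * (negMulLog (2/3 - q * x) + q * negMulLog (2 * x) + negMulLog (1/3 - q * x)) := by
  funext x
  simp only [fCW, negMulLog, logb]
  ring

lemma strictConcaveOn_fCW {q : ℕ} (hq : 0 < q) :
    StrictConcaveOn ℝ (Icc (0 : ℝ) (1 / (3 * q))) (fCW q) := by
  have hq' : (0 : ℝ) < q := by exact_mod_cast hq
  have hqx {x : ℝ} (hx : x ∈ Icc (0 : ℝ) (1 / (3 * q))) : q * x ≤ 1 / 3 := by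
    have := hx.2
    rw [le_div_iff₀ (by positivity)] at this
    linarith
  have hsub (a : ℝ) (ha : 1 / 3 ≤ a) :
      ConcaveOn ℝ (Icc (0 : ℝ) (1 / (3 * q))) (fun x => negMulLog (a - q * x)) := by
    refine ((strictConcaveOn_negMulLog.comp_affine a (neg_ne_zero.2 hq'.ne')).concaveOn.subset
      (fun x hx => ?_) (convex_Icc _ _)).congr
        (fun x _ => by simp only [neg_mul, ← sub_eq_add_neg])
    simp only [mem_preimage, mem_Ici]
    linarith [hqx hx]
  have hmid : StrictConcaveOn ℝ (Icc (0 : ℝ) (1 / (3 * q))) (fun x => negMulLog (2 * x)) := by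
    refine ((strictConcaveOn_negMulLog.comp_affine 0 two_ne_zero).subset
      (fun x hx => ?_) (convex_Icc _ _)).congr (fun x _ => by simp only [zero_add])
    simp only [mem_preimage, mem_Ici]
    linarith [hx.1]
  rw [fCW_eq_negMulLog]
  exact ((((hsub _ (by norm_num)).add_strictConcaveOn (hmid.const_mul hq')).add_concaveOn
    (hsub _ le_rfl)).const_mul (inv_pos.2 (log_pos one_lt_two)))

lemma hasDerivAt_fCW (q : ℕ) {x : ℝ} (h₁ : 2 / 3 - q * x ≠ 0) (h₂ : x ≠ 0)
    (h₃ : 1 / 3 - q * x ≠ 0) :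
    HasDerivAt (fCW q)
      ((log 2)⁻¹ * (q * (log (2 / 3 - q * x) + log (1 / 3 - q * x) - 2 * log (2 * x)))) x := by
  have hsub (a : ℝ) (ha : a - q * x ≠ 0) :
      HasDerivAt (fun y => negMulLog (a - q * y)) ((-log (a - q * x) - 1) * -q) x :=
    (hasDerivAt_negMulLog ha).comp (h := fun y => a - q * y) x
      (by simpa using ((hasDerivAt_id x).const_mul (q : ℝ)).const_sub a)
  have hmid : HasDerivAt (fun y => negMulLog (2 * y)) ((-log (2 * x) - 1) * 2) x :=
    (hasDerivAt_negMulLog (mul_ne_zero two_ne_zero h₂)).comp (h := fun y => 2 * y) x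
      (by simpa using (hasDerivAt_id x).const_mul (2 : ℝ))
  rw [fCW_eq_negMulLog]
  exact ((((hsub _ h₁).add (hmid.const_mul (q : ℝ))).add (hsub _ h₃)).const_mul
    (log 2)⁻¹).congr_deriv (by ring)

lemma hasDerivAt_fCW_eq_zero (q : ℕ) {x : ℝ} (hx : x ≠ 0)
    (hbal : (2 / 3 - q * x) * (1 / 3 - q * x) = (2 * x) ^ 2) : HasDerivAt (fCW q) 0 x := by
  have hprod : (2 / 3 - q * x) * (1 / 3 - q * x) ≠ 0 :=
    hbal ▸ pow_ne_zero 2 (mul_ne_zero two_ne_zero hx)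
  obtain ⟨h₁, h₃⟩ := mul_ne_zero_iff.1 hprod
  convert hasDerivAt_fCW q h₁ hx h₃ using 1
  rw [← log_mul h₁ h₃, hbal, log_pow]
  push_cast
  ring

/-- The smaller root of `(c² - 4)x² - cx + 2/9 = 0`, i.e. of `(2/3 - cx)(1/3 - cx) = (2x)²`. -/
noncomputable def cwCritical (c : ℝ) : ℝ := (3 * c - Real.sqrt (32 + c ^ 2)) / (6 * (c ^ 2 - 4))

section cwCritical

variable {c : ℝ}

lemma cwCritical_pos (hc : 2 < c) : 0 < cwCritical c := by
  have hs : Real.sqrt (32 + c ^ 2) < 3 * c := (Real.sqrt_lt' (by linarith)).2 (by nlinarith)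
  exact div_pos (by linarith) (by nlinarith)

lemma cwCritical_lt (hc : 2 < c) : cwCritical c < 1 / (3 * c) := by
  set s := Real.sqrt (32 + c ^ 2)
  have hs : s ^ 2 = 32 + c ^ 2 := Real.sq_sqrt (by positivity)
  have hcs : c ^ 2 + 8 < c * s :=
    (pow_lt_pow_iff_left₀ (by positivity) (by positivity [s]) two_ne_zero).1 (by nlinarith)
  rw [cwCritical, div_lt_div_iff₀ (by nlinarith) (by linarith)]
  nlinarith

lemma cwCritical_balance (hc : c ^ 2 ≠ 4) :
    (2 / 3 - c * cwCritical c) * (1 / 3 - c * cwCritical c) = (2 * cwCritical c) ^ 2 := by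
  have hs : Real.sqrt (32 + c ^ 2) ^ 2 = 32 + c ^ 2 := Real.sq_sqrt (by positivity)
  have hc' : c ^ 2 - 4 ≠ 0 := sub_ne_zero.2 hc
  rw [cwCritical]
  field_simp
  linear_combination 9 * (c ^ 2 - 4) * hs

end cwCritical

end

open Set in
/-- the average marginal entropy of the symmetric distributions on
the support of `CW_q` equals `f_q(x)`, and for `q ≥ 3` the maximum of `f_q` over
`[0, 1/(3q)]` is attained (uniquely) at `x* = (3q − √(32+q²))/(6(q²−4))`. -/
theorem fCW_max (q : ℕ) (hq : 3 ≤ q) :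
    (∀ x ∈ Icc (0:ℝ) (1 / (3 * q)), entH (cwMarginal q x) = fCW q x) ∧
    (let xs : ℝ := (3 * q - Real.sqrt (32 + q ^ 2)) / (6 * (q ^ 2 - 4))
     xs ∈ Ioo (0:ℝ) (1 / (3 * q)) ∧
     IsMaxOn (fCW q) (Icc (0:ℝ) (1 / (3 * q))) xs ∧
     ∀ y ∈ Icc (0:ℝ) (1 / (3 * q)), y ≠ xs → fCW q y < fCW q xs) := by
  have hc : (2 : ℝ) < q := by exact_mod_cast hq
  have hconc := strictConcaveOn_fCW (q := q) (by omega)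
  have hmem : cwCritical q ∈ Ioo (0 : ℝ) (1 / (3 * q)) := ⟨cwCritical_pos hc, cwCritical_lt hc⟩
  have hcrit : HasDerivAt (fCW q) 0 (cwCritical q) :=
    hasDerivAt_fCW_eq_zero q (cwCritical_pos hc).ne' (cwCritical_balance (by nlinarith))
  have hmax : IsMaxOn (fCW q) (Icc 0 (1 / (3 * q))) (cwCritical q) :=
    hconc.concaveOn.isMaxOn_of_hasDerivAt_eq_zero (by rwa [interior_Icc]) hcrit
  exact ⟨fun x _ => entH_cwMarginal q x, hmem, hmax,
    fun y hy hne => hconc.lt_of_isMaxOn hmax (Ioo_subset_Icc_self hmem) hy hne⟩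
end
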